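/- arXiv:2601.15009 — 5 statements merged into one kernel-verified Lean document; each statement's English description precedes it below -/
import Mathlib

section
/- Let V be a real vector space, n ≥ 1 a natural number, ξ ∈ V, and Ω, ω, r real numbers. Let L, S, g : V → V → ℝ be bilinear forms and η : V → ℝ a linear form with η(ξ) = 1, g(X,ξ) = η(X) for all X, S(X,ξ) = −2n·η(X) for all X, and L(X,ξ) = 0 for all X. If for all X, Y ∈ V one has L(X,Y) + 2S(X,Y) = 2Λ·g(X,Y) + 2ω·r·g(X,Y) + 2μ·η(X)·η(Y) with Λ = Ω − (2n−1) + 4ωn² and μ = −1, then Ω = −ω·(4n² + r); moreover, if ω ≠ 0 then r = −4n² − Ω/ω. -/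
/-- algebraic content of Corollary 3.2 (evaluating the η-RB
soliton equation at Y = ξ gives Ω = −ω(4n² + r), hence r = −4n² − Ω/ω when
ω ≠ 0). -/
theorem stmt_1 (V : Type*) [AddCommGroup V] [Module ℝ V] (n : ℕ) (hn : 1 ≤ n)
    (ξ : V) (Ω ω r : ℝ) (L S g : V →ₗ[ℝ] V →ₗ[ℝ] ℝ) (η : V →ₗ[ℝ] ℝ)
    (hη : η ξ = 1) (hg : ∀ X : V, g X ξ = η X)
    (hS : ∀ X : V, S X ξ = -2 * (n : ℝ) * η X)
    (hL : ∀ X : V, L X ξ = 0)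
    (Λ μ : ℝ)
    (hΛ : Λ = Ω - (2 * (n : ℝ) - 1) + 4 * ω * (n : ℝ) ^ 2) (hμ : μ = -1)
    (h : ∀ X Y : V,
      L X Y + 2 * S X Y
        = 2 * Λ * g X Y + 2 * ω * r * g X Y + 2 * μ * η X * η Y) :
    Ω = -ω * (4 * (n : ℝ) ^ 2 + r) ∧
      (ω ≠ 0 → r = -4 * (n : ℝ) ^ 2 - Ω / ω) := by
  have key := h ξ ξ
  rw [hL, hS, hg, hη, hΛ, hμ] at key
  have hΩ : Ω = -ω * (4 * (n : ℝ) ^ 2 + r) := by linarith [key]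
  refine ⟨hΩ, fun hω => ?_⟩
  field_simp [hΩ]
  linear_combination hΩ
end

section
/- Let n ≥ 1 be a natural number and V a (2n+1)-dimensional real inner product space with orthonormal basis (e₁, …, e_{2n+1}). Let S : V → V → ℝ be a bilinear form with trace r := Σᵢ S(eᵢ,eᵢ), and let R̂ : V → V → V → V → ℝ be a multilinear map satisfying the Ricci contraction identity Σᵢ R̂(eᵢ, X, Y, eᵢ) = S(X,Y) for all X, Y ∈ V. If for all X, Y, Z, W ∈ V one has R̂(X,Y,Z,W) + (1/(2n))·[⟨X,Z⟩·S(Y,W) − ⟨Y,Z⟩·S(X,W)] = 0 (W₂-flatness), then S(X,Y) = (r/(2n+1))·⟨X,Y⟩ for all X, Y ∈ V. -/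
open scoped RealInnerProductSpace

/-- equation (4.3) of the paper (a W₂-flat (2n+1)-dimensional
manifold is Einstein with S = (r/(2n+1))g). -/
theorem stmt_5 (n : ℕ) (hn : 1 ≤ n) (V : Type*) [NormedAddCommGroup V]
    [InnerProductSpace ℝ V] (e : OrthonormalBasis (Fin (2 * n + 1)) ℝ V)
    (S : V →ₗ[ℝ] V →ₗ[ℝ] ℝ)
    (R : V →ₗ[ℝ] V →ₗ[ℝ] V →ₗ[ℝ] V →ₗ[ℝ] ℝ)
    (r : ℝ) (hr : r = ∑ i, S (e i) (e i))
    (hRic : ∀ X Y : V, ∑ i, R (e i) X Y (e i) = S X Y)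
    (hflat : ∀ X Y Z W : V,
      R X Y Z W + (1 / (2 * (n : ℝ)))
          * (⟪X, Z⟫ * S Y W - ⟪Y, Z⟫ * S X W) = 0) :
    ∀ X Y : V, S X Y = (r / (2 * (n : ℝ) + 1)) * ⟪X, Y⟫ := by
  intro X Y
  have hn' : (0:ℝ) < 2 * (n : ℝ) := by positivity
  have key : ∑ i, (R (e i) X Y (e i) + (1 / (2 * (n : ℝ)))
      * (⟪e i, Y⟫ * S X (e i) - ⟪X, Y⟫ * S (e i) (e i))) = 0 :=
    Finset.sum_eq_zero fun i _ => hflat (e i) X Y (e i)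
  have hS : ∑ i, ⟪e i, Y⟫ * S X (e i) = S X Y := by
    have := (S X).congr_arg (e.sum_repr' Y)
    rw [map_sum] at this
    simpa [e.repr_apply_apply, real_inner_comm, mul_comm, eq_comm] using this.symm
  rw [Finset.sum_add_distrib, hRic, ← Finset.mul_sum] at key
  rw [Finset.sum_sub_distrib, hS, ← Finset.mul_sum, ← hr] at key
  have h2n1 : (2 * (n : ℝ) + 1) ≠ 0 := by positivity
  field_simp at key ⊢
  linarith [key]
end

section
/- Let V be a real vector space, n ≥ 1 a natural number, ξ ∈ V, and f, Ω, ω, r real numbers. Let g : V → V → ℝ be a bilinear form and η : V → ℝ a linear form with η(ξ) = 1 and g(X,ξ) = η(X) for all X. Suppose that for all X, Y ∈ V: 2f·g(X,Y) + 2·(r/(2n+1))·g(X,Y) = 2Λ·g(X,Y) + 2ω·r·g(X,Y) + 2μ·η(X)·η(Y), with Λ = Ω − (2n−1) + 4ωn² and μ = −1. Then Ω = f + r/(2n+1) + 2n − ω·r − 4ω·n². -/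
/-- algebraic content of Theorem 4.2 (W₂-flat Kenmotsu manifold
with concircular potential vector field; Ω = f + r/(2n+1) + 2n − ωr − 4ωn²). -/
theorem stmt_6 (V : Type*) [AddCommGroup V] [Module ℝ V] (n : ℕ) (hn : 1 ≤ n)
    (ξ : V) (f Ω ω r : ℝ) (g : V →ₗ[ℝ] V →ₗ[ℝ] ℝ) (η : V →ₗ[ℝ] ℝ)
    (hη : η ξ = 1) (hg : ∀ X : V, g X ξ = η X)
    (Λ μ : ℝ)
    (hΛ : Λ = Ω - (2 * (n : ℝ) - 1) + 4 * ω * (n : ℝ) ^ 2) (hμ : μ = -1)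
    (h : ∀ X Y : V,
      2 * f * g X Y + 2 * (r / (2 * (n : ℝ) + 1)) * g X Y
        = 2 * Λ * g X Y + 2 * ω * r * g X Y + 2 * μ * η X * η Y) :
    Ω = f + r / (2 * (n : ℝ) + 1) + 2 * (n : ℝ) - ω * r
        - 4 * ω * (n : ℝ) ^ 2 := by
  have := h ξ ξ
  rw [hg, hη, hΛ, hμ] at this
  linarith
end

section
/- Let n ≥ 1 be a natural number, V a (2n+1)-dimensional real inner product space with orthonormal basis (e₁, …, e_{2n+1}), ξ ∈ V a unit vector with η(X) := ⟨X,ξ⟩, ϱ ∈ V a vector, γ : V → ℝ a linear form, and Ψ, Ω, ω, r real numbers. Let S : V → V → ℝ be a bilinear form with Σᵢ S(eᵢ,eᵢ) = r. If for all X, Y ∈ V one has 2·[−Ψ + Ω − (2n−1) + 4ωn² + ω·r]·⟨X,Y⟩ − 2S(X,Y) − 2η(X)·η(Y) = γ(X)·⟨ϱ,Y⟩ + γ(Y)·⟨ϱ,X⟩, then Ω = (γ(ϱ) + r + 1)/(2n+1) + Ψ + (2n−1) − ω·(r + 4n²). -/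
open scoped RealInnerProductSpace

/-- algebraic content of Theorem 5.1 (torse-forming potential
vector field; Ω = (γ(ϱ) + r + 1)/(2n+1) + Ψ + (2n−1) − ω(r + 4n²)). -/
theorem stmt_9 (n : ℕ) (hn : 1 ≤ n) (V : Type*) [NormedAddCommGroup V]
    [InnerProductSpace ℝ V] (e : OrthonormalBasis (Fin (2 * n + 1)) ℝ V)
    (ξ : V) (hξ : ‖ξ‖ = 1) (ϱ : V) (γ : V →ₗ[ℝ] ℝ) (Ψ Ω ω r : ℝ)
    (S : V →ₗ[ℝ] V →ₗ[ℝ] ℝ) (htr : ∑ i, S (e i) (e i) = r)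
    (h : ∀ X Y : V,
      2 * (-Ψ + Ω - (2 * (n : ℝ) - 1) + 4 * ω * (n : ℝ) ^ 2 + ω * r) * ⟪X, Y⟫
          - 2 * S X Y - 2 * ⟪X, ξ⟫ * ⟪Y, ξ⟫
        = γ X * ⟪ϱ, Y⟫ + γ Y * ⟪ϱ, X⟫) :
    Ω = (γ ϱ + r + 1) / (2 * (n : ℝ) + 1) + Ψ + (2 * (n : ℝ) - 1)
        - ω * (r + 4 * (n : ℝ) ^ 2) := by
  set c : ℝ := -Ψ + Ω - (2 * (n : ℝ) - 1) + 4 * ω * (n : ℝ) ^ 2 + ω * r with hc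
  have hsum : ∑ i : Fin (2*n+1), (2 * c * ⟪e i, e i⟫ - 2 * S (e i) (e i) - 2 * ⟪e i, ξ⟫ * ⟪e i, ξ⟫) = ∑ i : Fin (2*n+1), (γ (e i) * ⟪ϱ, e i⟫ + γ (e i) * ⟪ϱ, e i⟫) := Finset.sum_congr rfl (fun i _ => h (e i) (e i))
  have h1 : ∑ i : Fin (2*n+1), ⟪e i, e i⟫ = (2*(n:ℝ)+1) := by
    simp [real_inner_self_eq_norm_sq, e.orthonormal.1]
  have h2 : ∑ i : Fin (2*n+1), ⟪e i, ξ⟫ * ⟪e i, ξ⟫ = 1 := by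
    have := e.sum_inner_mul_inner ξ ξ
    rw [show ⟪ξ, ξ⟫ = 1 by
      rw [real_inner_self_eq_norm_sq, hξ]; norm_num] at this
    calc ∑ i : Fin (2*n+1), ⟪e i, ξ⟫ * ⟪e i, ξ⟫
        = ∑ i, ⟪ξ, e i⟫ * ⟪e i, ξ⟫ := by
          simp [real_inner_comm]
      _ = 1 := this
  have h3 : ∑ i : Fin (2*n+1), γ (e i) * ⟪ϱ, e i⟫ = γ ϱ := by
    have hrep : ∑ i : Fin (2*n+1), ⟪ϱ, e i⟫ • e i = ϱ := by
      simpa [real_inner_comm] using e.sum_repr' ϱ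
    calc ∑ i : Fin (2*n+1), γ (e i) * ⟪ϱ, e i⟫
        = γ (∑ i, ⟪ϱ, e i⟫ • e i) := by
          simp [map_sum, mul_comm]
      _ = γ ϱ := by rw [hrep]
  rw [Finset.sum_sub_distrib, Finset.sum_sub_distrib, Finset.sum_add_distrib,
    ← Finset.mul_sum, ← Finset.mul_sum, h1, htr] at hsum
  have e2 : ∑ x : Fin (2*n+1), 2 * ⟪e x, ξ⟫ * ⟪e x, ξ⟫ = 2 := by
    simp only [mul_assoc, ← Finset.mul_sum, h2]; norm_num
  rw [e2] at hsum
  rw [h3] at hsum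
  have hne : (2*(n:ℝ)+1) ≠ 0 := by positivity
  rw [hc] at hsum
  field_simp
  nlinarith [hsum]
end

section
/- For p ∈ ℝ⁵ define the bilinear form g_p on ℝ⁵ by g_p(v,w) = e^{2p₅}·(v₁w₁ + v₂w₂ + v₃w₃ + v₄w₄) + v₅w₅, and define the vector field z : ℝ⁵ → ℝ⁵ by z(p) = (p₁, p₂, p₃, p₄, 1). For vector fields V, W : ℝ⁵ → ℝ⁵ let [V,W](x) = DW(x)(V(x)) − DV(x)(W(x)) denote their Lie bracket (D the Fréchet derivative). Then for every p ∈ ℝ⁵ and all v, w ∈ ℝ⁵, writing V and W for the constant vector fields with values v and w: D(q ↦ g_q(v,w))(p)(z(p)) − g_p([z,V](p), w) − g_p(v, [z,W](p)) = 4·(g_p(v,w) − v₅·w₅). -/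
/-- The metric of the paper's 5-dimensional Kenmotsu example in standard
coordinates: `g_p(v,w) = e^{2p₅}(v₁w₁ + v₂w₂ + v₃w₃ + v₄w₄) + v₅w₅`. -/
noncomputable def kenMetric (p v w : Fin 5 → ℝ) : ℝ :=
  Real.exp (2 * p 4) * (v 0 * w 0 + v 1 * w 1 + v 2 * w 2 + v 3 * w 3)
    + v 4 * w 4

/-- The Lie bracket of vector fields on ℝ⁵:
`[V,W](x) = DW(x)(V(x)) − DV(x)(W(x))`. -/
noncomputable def lieBracket (V W : (Fin 5 → ℝ) → (Fin 5 → ℝ)) :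
    (Fin 5 → ℝ) → (Fin 5 → ℝ) :=
  fun x => fderiv ℝ W x (V x) - fderiv ℝ V x (W x)

/-- The potential vector field of the paper's example:
`z = y₁∂₁ + y₂∂₂ + y₃∂₃ + y₄∂₄ + ∂₅`, i.e. `z(p) = (p₁, p₂, p₃, p₄, 1)`. -/
def zField (p : Fin 5 → ℝ) : Fin 5 → ℝ :=
  fun i => if i = 4 then 1 else p i


noncomputable def Lmap : (Fin 5 → ℝ) →L[ℝ] (Fin 5 → ℝ) :=
  ContinuousLinearMap.pi (fun i => if i = 4 then 0 else ContinuousLinearMap.proj i)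

lemma Lmap_apply (v : Fin 5 → ℝ) (i : Fin 5) :
    Lmap v i = if i = 4 then 0 else v i := by
  simp [Lmap, ContinuousLinearMap.pi_apply]
  split <;> simp

lemma fderiv_zField (p : Fin 5 → ℝ) : fderiv ℝ zField p = Lmap := by
  have h : HasFDerivAt zField Lmap p := by
    have h0 : zField = fun q => Lmap q + (fun i => if i = 4 then (1:ℝ) else 0) := by
      funext q i
      simp [zField, Lmap_apply]
      split <;> simp
    rw [h0]
    exact (Lmap.hasFDerivAt).add_const _
  exact h.fderiv

lemma bracket_const (p v : Fin 5 → ℝ) :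
    lieBracket zField (fun _ => v) p = fun i => if i = 4 then 0 else -v i := by
  funext i
  simp [lieBracket, fderiv_zField, fderiv_const, Lmap_apply]
  split <;> simp

/-- the Lie derivative of the metric along `z`, evaluated on
constant vector fields, equals `4(g_p(v,w) − v₅w₅)` (equation (6.5)). -/
theorem stmt_17 :
    ∀ (p v w : Fin 5 → ℝ),
      fderiv ℝ (fun q => kenMetric q v w) p (zField p)
          - kenMetric p (lieBracket zField (fun _ => v) p) w
          - kenMetric p v (lieBracket zField (fun _ => w) p)
        = 4 * (kenMetric p v w - v 4 * w 4) := by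
  intro p v w
  set S := v 0 * w 0 + v 1 * w 1 + v 2 * w 2 + v 3 * w 3 with hS
  have hd : HasFDerivAt (fun q => kenMetric q v w)
      (S • ((Real.exp (2 * p 4)) • ((2:ℝ) • (ContinuousLinearMap.proj 4 :
        (Fin 5 → ℝ) →L[ℝ] ℝ)))) p := by
    have h1 : HasFDerivAt (fun q : Fin 5 → ℝ => 2 * q 4)
        ((2:ℝ) • (ContinuousLinearMap.proj 4 : (Fin 5 → ℝ) →L[ℝ] ℝ)) p :=
      (ContinuousLinearMap.proj 4 : (Fin 5 → ℝ) →L[ℝ] ℝ).hasFDerivAt.const_mul 2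
    have h2 := h1.exp
    have h3 := h2.const_mul S
    have h4 := h3.add_const (v 4 * w 4)
    have hf : (fun q : Fin 5 → ℝ => S * Real.exp (2 * q 4) + v 4 * w 4)
        = fun q => kenMetric q v w := by
      funext q; simp [kenMetric]; ring
    rw [← hf]
    convert h4 using 1
  rw [hd.fderiv, bracket_const, bracket_const]
  simp [kenMetric, zField]
  ring
end
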